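/- The generating functions satisfy (1 + U) · W_1 = V_1 · U in ℚ[[x, y_1, …, y_m]]. -/

import Mathlib

/-- A block: a rectangle of width `width` and height 1, whose leftmost cell is in
column `left` and whose row is `height`. -/
structure Blk where
  left : ℤ
  height : ℕ
  width : ℕ
deriving DecidableEq

/-- The set of columns occupied by a block. -/
def Blk.colsSet (b : Blk) : Set ℤ := Set.Ico b.left (b.left + b.width)

/-- The set of cells occupied by a block. -/
def Blk.cells (b : Blk) : Set (ℤ × ℕ) := b.colsSet ×ˢ ({b.height} : Set ℕ)

/-- The blocks of a configuration occupy pairwise disjoint cells. -/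
def disjointCells (T : Finset Blk) : Prop :=
  (T : Set Blk).Pairwise fun a b => Disjoint a.cells b.cells

/-- Every block at height `h + 1` shares a column with some block at height `h`. -/
def supported (T : Finset Blk) : Prop :=
  ∀ b ∈ T, ∀ h : ℕ, b.height = h + 1 →
    ∃ b' ∈ T, b'.height = h ∧ ∃ x : ℤ, x ∈ b.colsSet ∧ x ∈ b'.colsSet

/-- The set of columns occupied by the blocks of `T` at height `h`. -/
def colsAt (T : Finset Blk) (h : ℕ) : Set ℤ :=
  {x | ∃ b ∈ T, b.height = h ∧ x ∈ b.colsSet}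

/-- All blocks have widths from the list `s`. -/
def widthsOK {m : ℕ} (s : Fin m → ℕ) (T : Finset Blk) : Prop :=
  ∀ b ∈ T, ∃ i, b.width = s i

/-- An `S`-omino tower (normalized representative of its horizontal-translation class):
widths from `s`, pairwise disjoint cells, every block above the bottom row supported,
and the columns occupied at height 0 form a nonempty interval starting at column 0
(the normalization picking one representative per translation class). -/
def IsTower {m : ℕ} (s : Fin m → ℕ) (T : Finset Blk) : Prop :=
  widthsOK s T ∧ disjointCells T ∧ supported T ∧
    ∃ hi : ℤ, 0 ≤ hi ∧ colsAt T 0 = Set.Icc 0 hi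

/-- The number of blocks of width `w` in `T`. -/
def countW (T : Finset Blk) (w : ℕ) : ℕ := (T.filter fun b => b.width = w).card

/-- The number of blocks in the bottom row of `T`. -/
def bottomCount (T : Finset Blk) : ℕ := (T.filter fun b => b.height = 0).card

/-- A configuration over a platform occupying columns `{0, …, ℓ−1}` at height `-1`:
a finite (possibly empty) collection of pairwise disjoint blocks with widths from `s`,
every block at height `h ≥ 1` sharing a column with some block at height `h−1`, and
every block at height `0` sharing a column with the platform.  Such configurations are
not identified up to translation. -/
def IsConfig {m : ℕ} (s : Fin m → ℕ) (ℓ : ℕ) (T : Finset Blk) : Prop :=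
  widthsOK s T ∧ disjointCells T ∧ supported T ∧
    ∀ b ∈ T, b.height = 0 → ∃ x : ℤ, x ∈ b.colsSet ∧ 0 ≤ x ∧ x < (ℓ : ℤ)

/-- No block occupies any column `< 0`. -/
def leftFree (T : Finset Blk) : Prop := ∀ b ∈ T, 0 ≤ b.left

/-- The generating function of a class `P` of configurations in `ℚ[[x, y_1, …, y_m]]`
(variable `none` is `x`; variable `some i` is `y_i`): the coefficient of the monomial
`x^n y_1^{d_1} ⋯ y_m^{d_m}` is the number of configurations `T` with `P T`, `n` blocks
in total and `d_i` blocks of width `s_i` for each `i`, i.e. the sum of the weights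
`∏_i (x y_i)^{n_i(T)}` over all `T` with `P T`. -/
noncomputable def gf {m : ℕ} (s : Fin m → ℕ) (P : Finset Blk → Prop) :
    MvPowerSeries (Option (Fin m)) ℚ :=
  fun d => (Nat.card {T : Finset Blk // P T ∧ T.card = d none ∧
    ∀ i, countW T (s i) = d (some i)} : ℚ)

/-- `W_b`: generating function of `S`-omino towers with exactly `b` blocks in the bottom
row (towers identified up to translation via the normalized representative). -/
noncomputable def Wgf {m : ℕ} (s : Fin m → ℕ) (b : ℕ) : MvPowerSeries (Option (Fin m)) ℚ :=
  gf s fun T => IsTower s T ∧ bottomCount T = b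

/-- `U`: generating function of towers in `𝒲₁` having no block in any column strictly to
the left of the left end of the bottom block (which sits at column 0). -/
noncomputable def Ugf {m : ℕ} (s : Fin m → ℕ) : MvPowerSeries (Option (Fin m)) ℚ :=
  gf s fun T => IsTower s T ∧ bottomCount T = 1 ∧ leftFree T

/-- `V_ℓ`: generating function of configurations over a platform of width `ℓ`. -/
noncomputable def Vgf {m : ℕ} (s : Fin m → ℕ) (ℓ : ℕ) : MvPowerSeries (Option (Fin m)) ℚ :=
  gf s fun T => IsConfig s ℓ T

/-- `H_ℓ`: generating function of configurations over a platform of width `ℓ` having no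
block in any column strictly to the left of the left end of the platform. -/
noncomputable def Hgf {m : ℕ} (s : Fin m → ℕ) (ℓ : ℕ) : MvPowerSeries (Option (Fin m)) ℚ :=
  gf s fun T => IsConfig s ℓ T ∧ leftFree T

/-!
Every configuration of `𝒱₁` either has its bottom block starting at column `0`, and is then a
tower of `𝒲₁`, or has all its bottom blocks sticking out to the left of column `0` (a hanging
configuration, possibly empty); hence `V₁ = W₁ + L` with `L` the series of hanging
configurations. It remains to see `L · U = W₁`. Dropping a hanging configuration, block by block
from the bottom up, onto a tower of `𝒰` gives a tower of `𝒲₁`. Conversely, the blocks of a tower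
of `𝒲₁` that rest, directly or through blocks below them, on a block reaching past the left end
of the bottom block form the overhanging part; the other blocks form a tower of `𝒰`, and letting
the overhanging part fall to the ground gives back the hanging configuration. Then
`V₁ U = W₁ U + W₁ = (1 + U) W₁`.
-/

open Finset

open scoped Classical

namespace Blk

def Overlaps (a b : Blk) : Prop := ∃ x, x ∈ a.colsSet ∧ x ∈ b.colsSet

theorem Overlaps.symm {a b : Blk} (h : a.Overlaps b) : b.Overlaps a :=
  let ⟨x, ha, hb⟩ := h
  ⟨x, hb, ha⟩

theorem mem_colsSet {b : Blk} {x : ℤ} : x ∈ b.colsSet ↔ b.left ≤ x ∧ x < b.left + b.width :=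
  Set.mem_Ico

theorem overlaps_self {b : Blk} (h : 0 < b.width) : b.Overlaps b :=
  ⟨b.left, mem_colsSet.2 ⟨le_rfl, by omega⟩, mem_colsSet.2 ⟨le_rfl, by omega⟩⟩

def withHeight (b : Blk) (h : ℕ) : Blk := ⟨b.left, h, b.width⟩

@[simp] theorem withHeight_height (b : Blk) (h : ℕ) : (b.withHeight h).height = h := rfl

@[simp] theorem withHeight_self (b : Blk) : b.withHeight b.height = b := rfl

@[simp] theorem overlaps_withHeight_left {a b : Blk} {h : ℕ} :
    (a.withHeight h).Overlaps b ↔ a.Overlaps b := Iff.rfl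

@[simp] theorem overlaps_withHeight_right {a b : Blk} {h : ℕ} :
    a.Overlaps (b.withHeight h) ↔ a.Overlaps b := Iff.rfl

end Blk

section

variable {m : ℕ} {s : Fin m → ℕ} {D C T : Finset Blk} {a b p : Blk}

theorem disjointCells_iff :
    disjointCells T ↔ ∀ a ∈ T, ∀ b ∈ T, a.Overlaps b → a.height = b.height → a = b := by
  constructor
  · intro hT a ha b hb ⟨x, hxa, hxb⟩ hh
    by_contra hne
    exact Set.disjoint_left.1 (hT ha hb hne) (⟨hxa, rfl⟩ : (x, a.height) ∈ a.cells) ⟨hxb, hh⟩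
  · rintro h a ha b hb hne
    rw [Set.disjoint_left]
    rintro ⟨x, k⟩ ⟨hxa, hka⟩ ⟨hxb, hkb⟩
    exact hne (h a ha b hb ⟨x, hxa, hxb⟩ (hka.symm.trans hkb))

theorem disjointCells.eq_of_overlaps (hT : disjointCells T) (ha : a ∈ T) (hb : b ∈ T)
    (hab : a.Overlaps b) (hh : a.height = b.height) : a = b :=
  disjointCells_iff.1 hT a ha b hb hab hh

theorem disjointCells.mono {S : Finset Blk} (hT : disjointCells T) (hST : S ⊆ T) :
    disjointCells S :=
  Set.Pairwise.mono (coe_subset.2 hST) hT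

theorem supported.exists_overlaps (hT : supported T) (hb : b ∈ T) {k : ℕ}
    (hk : b.height = k + 1) : ∃ a ∈ T, a.height = k ∧ a.Overlaps b :=
  let ⟨a, ha, hak, x, hxb, hxa⟩ := hT b hb k hk
  ⟨a, ha, hak, x, hxa, hxb⟩

noncomputable def lowerOverlaps (C : Finset Blk) (b : Blk) : Finset Blk :=
  {a ∈ C | a.height < b.height ∧ a.Overlaps b}

theorem mem_lowerOverlaps : a ∈ lowerOverlaps C b ↔ a ∈ C ∧ a.height < b.height ∧ a.Overlaps b :=
  mem_filter

theorem supported.height_eq_sup (hT : supported T) (hb : b ∈ T) :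
    b.height = (lowerOverlaps T b).sup (·.height + 1) := by
  refine le_antisymm ?_ (Finset.sup_le fun a ha => (mem_lowerOverlaps.1 ha).2.1)
  cases hk : b.height with
  | zero => exact Nat.zero_le _
  | succ k =>
    obtain ⟨a, ha, hak, hab⟩ := hT.exists_overlaps hb hk
    exact le_sup_of_le (mem_lowerOverlaps.2 ⟨ha, by omega, hab⟩) (by omega)

/-- The height at which `b` comes to rest when the blocks of `C` are dropped, lowest first, onto
the fixed blocks of `D`, each block keeping its columns. -/
noncomputable def fall (D C : Finset Blk) (b : Blk) : ℕ :=
  {a ∈ D | a.Overlaps b}.sup (·.height + 1) ⊔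
    (lowerOverlaps C b).attach.sup fun a => fall D C a + 1
termination_by b.height
decreasing_by exact (mem_lowerOverlaps.1 a.2).2.1

theorem fall_eq (D C : Finset Blk) (b : Blk) :
    fall D C b = {a ∈ D | a.Overlaps b}.sup (·.height + 1) ⊔
      (lowerOverlaps C b).sup fun a => fall D C a + 1 := by
  rw [fall]
  congr 1
  exact sup_attach _ fun a => fall D C a + 1

theorem height_lt_fall (ha : a ∈ D) (hab : a.Overlaps b) : a.height < fall D C b := by
  rw [fall_eq]
  exact le_sup_of_le_left <|
    le_sup (f := (·.height + 1)) ((mem_filter (p := (·.Overlaps b))).2 ⟨ha, hab⟩)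

theorem fall_lt_fall (ha : a ∈ C) (hlt : a.height < b.height) (hab : a.Overlaps b) :
    fall D C a < fall D C b := by
  rw [fall_eq D C b]
  exact le_sup_of_le_right <|
    le_sup (f := (fall D C · + 1)) (mem_lowerOverlaps.2 ⟨ha, hlt, hab⟩)

theorem exists_mem_of_sup_eq_add_one {ι : Type*} {t : Finset ι} {f : ι → ℕ} {k : ℕ}
    (h : t.sup (f · + 1) = k + 1) : ∃ i ∈ t, f i = k := by
  have ht : t.Nonempty := nonempty_iff_ne_empty.2 (by rintro rfl; simp at h)
  obtain ⟨i, hi, hsup⟩ := t.exists_mem_eq_sup ht (f · + 1)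
  exact ⟨i, hi, by omega⟩

theorem exists_of_fall_eq_add_one {k : ℕ} (h : fall D C b = k + 1) :
    (∃ a ∈ D, a.height = k ∧ a.Overlaps b) ∨ ∃ a ∈ lowerOverlaps C b, fall D C a = k := by
  rw [fall_eq] at h
  rcases max_eq_iff.1 h with ⟨h, -⟩ | ⟨h, -⟩
  · obtain ⟨a, ha, hak⟩ := exists_mem_of_sup_eq_add_one h
    exact .inl ⟨a, (mem_filter.1 ha).1, hak, (mem_filter.1 ha).2⟩
  · exact .inr (exists_mem_of_sup_eq_add_one h)

theorem eq_fall_of_forall {f : Blk → ℕ}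
    (hf : ∀ b ∈ C, f b = {a ∈ D | a.Overlaps b}.sup (·.height + 1) ⊔
      (lowerOverlaps C b).sup fun a => f a + 1) :
    ∀ b ∈ C, f b = fall D C b := by
  intro b hb
  induction hn : b.height using Nat.strong_induction_on generalizing b with
  | _ n ih =>
    rw [hf b hb, fall_eq]
    congr 1
    refine sup_congr rfl fun a ha => ?_
    obtain ⟨haC, hlt, -⟩ := mem_lowerOverlaps.1 ha
    rw [ih a.height (hn ▸ hlt) a haC rfl]

theorem fall_eq_height (hs : supported (D ∪ C))
    (hDC : ∀ a ∈ D, ∀ b ∈ C, a.Overlaps b → a.height < b.height) :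
    ∀ b ∈ C, fall D C b = b.height := by
  refine fun b hb => (eq_fall_of_forall (f := Blk.height) (fun b hb => ?_) b hb).symm
  have hD : {a ∈ D | a.Overlaps b} = lowerOverlaps D b :=
    filter_congr fun a ha => ⟨fun h => ⟨hDC a ha b hb h, h⟩, And.right⟩
  rw [hD, ← sup_union, lowerOverlaps, lowerOverlaps, ← filter_union]
  exact hs.height_eq_sup (mem_union_right D hb)

def PreservesStacking (φ : Blk → ℕ) (C : Finset Blk) : Prop :=
  ∀ a ∈ C, ∀ b ∈ C, a.Overlaps b → (φ a < φ b ↔ a.height < b.height)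

theorem preservesStacking_fall (hC : disjointCells C) : PreservesStacking (fall D C) C := by
  refine fun a ha b hb hab => ⟨fun h => ?_, fun h => fall_lt_fall ha h hab⟩
  rcases lt_trichotomy a.height b.height with hlt | heq | hgt
  · exact hlt
  · rw [hC.eq_of_overlaps ha hb hab heq] at h
    exact absurd h (lt_irrefl _)
  · exact absurd (fall_lt_fall hb hgt hab.symm) (lt_asymm h)

theorem PreservesStacking.height_eq {φ : Blk → ℕ} (hφ : PreservesStacking φ C) (ha : a ∈ C)
    (hb : b ∈ C) (hab : a.Overlaps b) (h : φ a = φ b) : a.height = b.height := by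
  rcases lt_trichotomy a.height b.height with hlt | heq | hgt
  · exact absurd ((hφ a ha b hb hab).2 hlt) (by omega)
  · exact heq
  · exact absurd ((hφ b hb a ha hab.symm).2 hgt) (by omega)

noncomputable def reheight (φ : Blk → ℕ) (C : Finset Blk) : Finset Blk :=
  C.image fun b => b.withHeight (φ b)

theorem mem_reheight {φ : Blk → ℕ} : p ∈ reheight φ C ↔ ∃ b ∈ C, b.withHeight (φ b) = p :=
  mem_image

theorem reheight_reheight (φ ψ : Blk → ℕ) (C : Finset Blk) :
    reheight ψ (reheight φ C) = reheight (fun b => ψ (b.withHeight (φ b))) C := by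
  simp only [reheight, image_image]
  rfl

theorem reheight_congr {φ ψ : Blk → ℕ} (h : ∀ b ∈ C, φ b = ψ b) :
    reheight φ C = reheight ψ C :=
  image_congr fun b hb => by simp only [h b hb]

theorem reheight_height (C : Finset Blk) : reheight Blk.height C = C := by
  simp [reheight]

theorem PreservesStacking.injOn {φ : Blk → ℕ} (hφ : PreservesStacking φ C)
    (hC : disjointCells C) (hw : ∀ b ∈ C, 0 < b.width) :
    Set.InjOn (fun b : Blk => b.withHeight (φ b)) C := by
  intro a ha b hb hab
  simp only [Blk.withHeight, Blk.mk.injEq] at hab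
  obtain ⟨hl, hφab, hwd⟩ := hab
  have hov : a.Overlaps b := by
    have := hw a ha
    exact ⟨a.left, Blk.mem_colsSet.2 ⟨le_rfl, by omega⟩, Blk.mem_colsSet.2 ⟨by omega, by omega⟩⟩
  exact hC.eq_of_overlaps ha hb hov (hφ.height_eq ha hb hov hφab)

/-- `fall D C` only sees in which order overlapping blocks of `C` are stacked, not their heights. -/
theorem fall_reheight {φ : Blk → ℕ} (hφ : PreservesStacking φ C) :
    ∀ b ∈ C, fall D (reheight φ C) (b.withHeight (φ b)) = fall D C b := by
  refine eq_fall_of_forall fun b hb => ?_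
  have hlow : lowerOverlaps (reheight φ C) (b.withHeight (φ b)) =
      (lowerOverlaps C b).image fun a => a.withHeight (φ a) := by
    rw [lowerOverlaps, reheight, filter_image]
    congr 1
    exact filter_congr fun a ha => by
      simpa using and_congr_left fun hab => hφ a ha b hb hab
  rw [fall_eq, hlow, sup_image]
  rfl

theorem reheight_fall_eq_self (hs : supported (D ∪ C))
    (hDC : ∀ a ∈ D, ∀ b ∈ C, a.Overlaps b → a.height < b.height) :
    reheight (fall D C) C = C :=
  (reheight_congr (fall_eq_height hs hDC)).trans (reheight_height C)

theorem IsConfig.width_pos {ℓ : ℕ} (hT : IsConfig s ℓ T) (hb : b ∈ T) : 0 < b.width := by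
  obtain ⟨x, hx⟩ : ∃ x, x ∈ b.colsSet := by
    cases hk : b.height with
    | zero => obtain ⟨x, hx, -⟩ := hT.2.2.2 b hb hk; exact ⟨x, hx⟩
    | succ k => obtain ⟨-, -, -, x, hx, -⟩ := hT.2.2.1 b hb k hk; exact ⟨x, hx⟩
  have := Blk.mem_colsSet.1 hx
  omega

theorem IsConfig.zero_mem_colsSet (hT : IsConfig s 1 T) (hb : b ∈ T) (h0 : b.height = 0) :
    (0 : ℤ) ∈ b.colsSet := by
  obtain ⟨x, hx, h0x, hx1⟩ := hT.2.2.2 b hb h0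
  obtain rfl : x = 0 := by omega
  exact hx

theorem isTower_and_bottomCount_eq_one_iff :
    IsTower s T ∧ bottomCount T = 1 ↔ IsConfig s 1 T ∧ ∃ b ∈ T, b.height = 0 ∧ 0 ≤ b.left := by
  constructor
  · rintro ⟨⟨hw, hd, hs, hi, hi0, hcols⟩, hcount⟩
    obtain ⟨b₀, hb₀⟩ := card_eq_one.1 hcount
    have hbot : ∀ b ∈ T, b.height = 0 ↔ b = b₀ := fun b hb => by
      simpa [hb] using Finset.ext_iff.1 hb₀ b
    have hb₀T : b₀ ∈ T := (mem_filter.1 (hb₀ ▸ mem_singleton_self b₀)).1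
    have hcols₀ : b₀.colsSet = Set.Icc 0 hi := by
      rw [← hcols]
      ext x
      constructor
      · exact fun hx => ⟨b₀, hb₀T, (hbot b₀ hb₀T).2 rfl, hx⟩
      · rintro ⟨b, hb, h0, hx⟩
        rwa [(hbot b hb).1 h0] at hx
    have h0 : (0 : ℤ) ∈ b₀.colsSet := hcols₀ ▸ ⟨le_rfl, hi0⟩
    have hl : 0 ≤ b₀.left := by
      have := Blk.mem_colsSet.1 h0
      exact (hcols₀ ▸ Blk.mem_colsSet.2 ⟨le_rfl, by omega⟩ : b₀.left ∈ Set.Icc 0 hi).1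
    refine ⟨⟨hw, hd, hs, fun b hb hb0 => ?_⟩, b₀, hb₀T, (hbot b₀ hb₀T).2 rfl, hl⟩
    rw [(hbot b hb).1 hb0]
    exact ⟨0, h0, le_rfl, by norm_num⟩
  · rintro ⟨hT, b₀, hb₀T, hb₀0, hb₀l⟩
    have h0 := hT.zero_mem_colsSet hb₀T hb₀0
    have hbot : ∀ b ∈ T, b.height = 0 → b = b₀ := fun b hb h =>
      hT.2.1.eq_of_overlaps hb hb₀T ⟨0, hT.zero_mem_colsSet hb h, h0⟩ (h.trans hb₀0.symm)
    have hl := Blk.mem_colsSet.1 h0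
    refine ⟨⟨hT.1, hT.2.1, hT.2.2.1, b₀.width - 1, by omega, ?_⟩, ?_⟩
    · ext x
      simp only [colsAt, Set.mem_Icc]
      constructor
      · rintro ⟨b, hb, h, hx⟩
        rw [hbot b hb h, Blk.mem_colsSet] at hx
        omega
      · exact fun hx => ⟨b₀, hb₀T, hb₀0, Blk.mem_colsSet.2 (by omega)⟩
    · rw [bottomCount, card_eq_one]
      exact ⟨b₀, eq_singleton_iff_unique_mem.2 ⟨mem_filter.2 ⟨hb₀T, hb₀0⟩,
        fun b hb => hbot b (mem_filter.1 hb).1 (mem_filter.1 hb).2⟩⟩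

def IsHanging (s : Fin m → ℕ) (T : Finset Blk) : Prop :=
  IsConfig s 1 T ∧ ∀ b ∈ T, b.height = 0 → b.left < 0

theorem isConfig_iff_or :
    IsConfig s 1 T ↔ (IsTower s T ∧ bottomCount T = 1) ∨ IsHanging s T := by
  rw [isTower_and_bottomCount_eq_one_iff]
  refine ⟨fun hT => ?_, by rintro (⟨hT, -⟩ | ⟨hT, -⟩) <;> exact hT⟩
  by_cases h : ∃ b ∈ T, b.height = 0 ∧ 0 ≤ b.left
  · exact .inl ⟨hT, h⟩
  · simp only [not_exists, not_and, not_le] at h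
    exact .inr ⟨hT, h⟩

theorem not_isHanging (hT : IsTower s T ∧ bottomCount T = 1) : ¬IsHanging s T := fun h =>
  let ⟨_, b, hb, h0, hl⟩ := isTower_and_bottomCount_eq_one_iff.1 hT
  absurd hl (not_le.2 (h.2 b hb h0))

inductive AboveOverhang (T : Finset Blk) : Blk → Prop
  | base {b : Blk} : b ∈ T → b.left < 0 → AboveOverhang T b
  | step {a b : Blk} : AboveOverhang T a → b ∈ T → a.height < b.height → a.Overlaps b →
      AboveOverhang T b

theorem AboveOverhang.mem (h : AboveOverhang T b) : b ∈ T := by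
  cases h <;> assumption

noncomputable def overhangPart (T : Finset Blk) : Finset Blk := {b ∈ T | AboveOverhang T b}

noncomputable def basePart (T : Finset Blk) : Finset Blk := {b ∈ T | ¬AboveOverhang T b}

theorem basePart_union_overhangPart (T : Finset Blk) : basePart T ∪ overhangPart T = T := by
  rw [union_comm]
  exact filter_union_filter_not_eq _ T

theorem basePart_eq_sdiff (T : Finset Blk) : basePart T = T \ overhangPart T :=
  filter_not _ T

theorem leftFree_basePart (T : Finset Blk) : leftFree (basePart T) := fun _ hb =>
  not_lt.1 fun h => (mem_filter.1 hb).2 (.base (mem_filter.1 hb).1 h)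

theorem height_lt_of_mem_basePart (hT : disjointCells T) (ha : a ∈ basePart T)
    (hb : b ∈ overhangPart T) (hab : a.Overlaps b) : a.height < b.height := by
  obtain ⟨haT, hna⟩ := mem_filter.1 ha
  obtain ⟨hbT, hob⟩ := mem_filter.1 hb
  rcases lt_trichotomy a.height b.height with h | h | h
  · exact h
  · exact absurd (hT.eq_of_overlaps haT hbT hab h ▸ hob) hna
  · exact absurd (hob.step haT h hab.symm) hna

theorem IsConfig.basePart {ℓ : ℕ} (hT : IsConfig s ℓ T) : IsConfig s ℓ (_root_.basePart T) := by
  have hsub : _root_.basePart T ⊆ T := filter_subset _ T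
  refine ⟨fun b hb => hT.1 b (hsub hb), hT.2.1.mono hsub, fun b hb k hk => ?_,
    fun b hb => hT.2.2.2 b (hsub hb)⟩
  obtain ⟨hbT, hnb⟩ := mem_filter.1 hb
  obtain ⟨a, ha, hak, hab⟩ := hT.2.2.1.exists_overlaps hbT hk
  exact ⟨a, mem_filter.2 ⟨ha, fun h => hnb (h.step hbT (by omega) hab)⟩, hak, hab.symm⟩

theorem isTower_basePart (hT : IsTower s T ∧ bottomCount T = 1) :
    IsTower s (basePart T) ∧ bottomCount (basePart T) = 1 := by
  obtain ⟨hT, b₀, hb₀, h0, hl⟩ := isTower_and_bottomCount_eq_one_iff.1 hT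
  refine isTower_and_bottomCount_eq_one_iff.2 ⟨hT.basePart, b₀, mem_filter.2 ⟨hb₀, fun h => ?_⟩,
    h0, hl⟩
  cases h with
  | base _ h => omega
  | step _ _ hlt _ => omega

theorem IsConfig.left_neg_of_mem_overhangPart (hT : IsConfig s 1 T) (hb : b ∈ overhangPart T)
    (hmin : ∀ a ∈ overhangPart T, a.height < b.height → ¬a.Overlaps b) :
    b.left < 0 ∧ (0 : ℤ) ∈ b.colsSet := by
  obtain ⟨hbT, hob⟩ := mem_filter.1 hb
  cases hob with
  | step ha _ hlt hab => exact absurd hab (hmin _ (mem_filter.2 ⟨ha.mem, ha⟩) hlt)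
  | base _ hl =>
    refine ⟨hl, ?_⟩
    cases hk : b.height with
    | zero => exact hT.zero_mem_colsSet hbT hk
    | succ k =>
      obtain ⟨a, ha, hak, x, hxa, hxb⟩ := hT.2.2.1.exists_overlaps hbT hk
      have hal : 0 ≤ a.left := not_lt.1 fun h =>
        hmin a (mem_filter.2 ⟨ha, .base ha h⟩) (by omega) ⟨x, hxa, hxb⟩
      rw [Blk.mem_colsSet] at hxa hxb ⊢
      omega

noncomputable def drop (D C : Finset Blk) : Finset Blk := D ∪ reheight (fall D C) C

theorem mem_drop : p ∈ drop D C ↔ p ∈ D ∨ ∃ b ∈ C, b.withHeight (fall D C b) = p := by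
  rw [drop, mem_union, mem_reheight]

theorem widthsOK_drop (hD : widthsOK s D) (hC : widthsOK s C) : widthsOK s (drop D C) := by
  intro p hp
  rcases mem_drop.1 hp with hp | ⟨b, hb, rfl⟩
  · exact hD p hp
  · exact hC b hb

theorem disjointCells_drop (hD : disjointCells D) (hC : disjointCells C) :
    disjointCells (drop D C) := by
  refine disjointCells_iff.2 fun p hp q hq hpq hh => ?_
  rcases mem_drop.1 hp with hp | ⟨a, ha, rfl⟩ <;> rcases mem_drop.1 hq with hq | ⟨b, hb, rfl⟩
  · exact hD.eq_of_overlaps hp hq hpq hh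
  · exact absurd hh (height_lt_fall (b := b) hp hpq).ne
  · exact absurd hh.symm (height_lt_fall (b := a) hq hpq.symm).ne
  · rw [hC.eq_of_overlaps ha hb hpq ((preservesStacking_fall hC).height_eq ha hb hpq hh)]

theorem supported_drop (hD : supported D) : supported (drop D C) := by
  intro p hp k hk
  rcases mem_drop.1 hp with hp | ⟨b, hb, rfl⟩
  · obtain ⟨a, ha, hak, hx⟩ := hD p hp k hk
    exact ⟨a, mem_union_left _ ha, hak, hx⟩
  · rcases exists_of_fall_eq_add_one hk with ⟨a, ha, hak, hab⟩ | ⟨a, ha, hak⟩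
    · exact ⟨a, mem_union_left _ ha, hak, hab.symm⟩
    · obtain ⟨haC, -, hab⟩ := mem_lowerOverlaps.1 ha
      exact ⟨_, mem_drop.2 (.inr ⟨a, haC, rfl⟩), hak, hab.symm⟩

theorem disjoint_reheight_fall (hw : ∀ b ∈ C, 0 < b.width) :
    Disjoint D (reheight (fall D C) C) := by
  refine disjoint_right.2 fun p hp hpD => ?_
  obtain ⟨b, hb, rfl⟩ := mem_reheight.1 hp
  exact lt_irrefl _ (height_lt_fall hpD (Blk.overlaps_self (hw b hb)))

theorem fall_pos (hC : IsConfig s 1 C) (hD : ∃ a ∈ D, (0 : ℤ) ∈ a.colsSet) (hb : b ∈ C) :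
    0 < fall D C b := by
  cases hk : b.height with
  | zero =>
    obtain ⟨a, ha, h0⟩ := hD
    exact (Nat.zero_le _).trans_lt (height_lt_fall ha ⟨0, h0, hC.zero_mem_colsSet hb hk⟩)
  | succ k =>
    obtain ⟨a, ha, hak, hab⟩ := hC.2.2.1.exists_overlaps hb hk
    exact (Nat.zero_le _).trans_lt (fall_lt_fall ha (by omega) hab)

theorem isTower_drop (hD : IsTower s D ∧ bottomCount D = 1) (hC : IsHanging s C) :
    IsTower s (drop D C) ∧ bottomCount (drop D C) = 1 := by
  obtain ⟨hD, b₀, hb₀, hb₀0, hb₀l⟩ := isTower_and_bottomCount_eq_one_iff.1 hD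
  refine isTower_and_bottomCount_eq_one_iff.2 ⟨⟨widthsOK_drop hD.1 hC.1.1,
    disjointCells_drop hD.2.1 hC.1.2.1, supported_drop hD.2.2.1, fun p hp h0 => ?_⟩,
    b₀, mem_union_left _ hb₀, hb₀0, hb₀l⟩
  rcases mem_drop.1 hp with hp | ⟨b, hb, rfl⟩
  · exact hD.2.2.2 p hp h0
  · exact absurd h0 (fall_pos hC.1 ⟨b₀, hb₀, hD.zero_mem_colsSet hb₀ hb₀0⟩ hb).ne'

theorem aboveOverhang_drop (hC : IsHanging s C) (hb : b ∈ C) :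
    AboveOverhang (drop D C) (b.withHeight (fall D C b)) := by
  induction hn : b.height using Nat.strong_induction_on generalizing b with
  | _ n ih =>
    have hmem : b.withHeight (fall D C b) ∈ drop D C := mem_drop.2 (.inr ⟨b, hb, rfl⟩)
    cases hk : b.height with
    | zero => exact .base hmem (hC.2 b hb hk)
    | succ k =>
      obtain ⟨a, ha, hak, hab⟩ := hC.1.2.2.1.exists_overlaps hb hk
      exact (ih k (by omega) ha hak).step hmem (fall_lt_fall ha (by omega) hab) hab

theorem AboveOverhang.mem_reheight_fall (hD : leftFree D) (h : AboveOverhang (drop D C) p) :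
    p ∈ reheight (fall D C) C := by
  induction h with
  | base hp hl => exact (mem_union.1 hp).resolve_left fun hpD => (hD _ hpD).not_gt hl
  | step _ hp hlt hab ih =>
    refine (mem_union.1 hp).resolve_left fun hpD => ?_
    obtain ⟨b, -, rfl⟩ := mem_reheight.1 ih
    exact (height_lt_fall (b := b) hpD hab.symm).not_gt hlt

theorem overhangPart_drop (hD : leftFree D) (hC : IsHanging s C) :
    overhangPart (drop D C) = reheight (fall D C) C := by
  ext p
  refine ⟨fun hp => (mem_filter.1 hp).2.mem_reheight_fall hD, fun hp => ?_⟩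
  obtain ⟨b, hb, rfl⟩ := mem_reheight.1 hp
  exact mem_filter.2 ⟨mem_union_right _ hp, aboveOverhang_drop hC hb⟩

theorem basePart_drop (hD : leftFree D) (hC : IsHanging s C) : basePart (drop D C) = D := by
  rw [basePart_eq_sdiff, overhangPart_drop hD hC, drop]
  exact union_sdiff_cancel_right (disjoint_reheight_fall fun b hb => hC.1.width_pos hb)

theorem drop_empty_overhangPart_drop (hD : leftFree D) (hC : IsHanging s C) :
    drop ∅ (overhangPart (drop D C)) = C := by
  rw [overhangPart_drop hD hC, drop, empty_union, reheight_reheight,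
    reheight_congr (fall_reheight (preservesStacking_fall hC.1.2.1)),
    reheight_fall_eq_self (by rw [empty_union]; exact hC.1.2.2.1) (by simp)]

theorem drop_basePart_drop_empty_overhangPart (hT : disjointCells T) (hs : supported T) :
    drop (basePart T) (drop ∅ (overhangPart T)) = T := by
  have hO : disjointCells (overhangPart T) := hT.mono (filter_subset _ T)
  rw [drop, drop, empty_union, reheight_reheight,
    reheight_congr (fall_reheight (preservesStacking_fall hO)),
    reheight_fall_eq_self (by rwa [basePart_union_overhangPart])
      fun a ha b hb => height_lt_of_mem_basePart hT ha hb,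
    basePart_union_overhangPart]

theorem IsConfig.isHanging_drop_empty_overhangPart (hT : IsConfig s 1 T) :
    IsHanging s (drop ∅ (overhangPart T)) := by
  have hOT : overhangPart T ⊆ T := filter_subset _ T
  have hbot : ∀ p ∈ drop ∅ (overhangPart T), p.height = 0 → p.left < 0 ∧ (0 : ℤ) ∈ p.colsSet := by
    intro p hp h0
    obtain ⟨b, hb, rfl⟩ : ∃ b ∈ overhangPart T, b.withHeight (fall ∅ (overhangPart T) b) = p := by
      simpa [mem_drop] using hp
    refine hT.left_neg_of_mem_overhangPart (b := b) hb fun a ha hlt hab => ?_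
    have := fall_lt_fall (D := ∅) ha hlt hab
    simp only [Blk.withHeight_height] at h0
    omega
  refine ⟨⟨widthsOK_drop (by simp [widthsOK]) fun b hb => hT.1 b (hOT hb),
    disjointCells_drop (by simp [disjointCells]) (hT.2.1.mono hOT),
    supported_drop (by simp [supported]),
    fun p hp h0 => ⟨0, (hbot p hp h0).2, le_rfl, by norm_num⟩⟩, fun p hp h0 => (hbot p hp h0).1⟩

noncomputable def dropEquiv (s : Fin m → ℕ) :
    {C // IsHanging s C} × {D // IsTower s D ∧ bottomCount D = 1 ∧ leftFree D} ≃
      {T // IsTower s T ∧ bottomCount T = 1} where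
  toFun p := ⟨drop p.2.1 p.1.1, isTower_drop ⟨p.2.2.1, p.2.2.2.1⟩ p.1.2⟩
  invFun T := (⟨_, (isTower_and_bottomCount_eq_one_iff.1 T.2).1.isHanging_drop_empty_overhangPart⟩,
    ⟨basePart T.1, (isTower_basePart T.2).1, (isTower_basePart T.2).2, leftFree_basePart T.1⟩)
  left_inv := fun ⟨⟨C, hC⟩, ⟨D, hD⟩⟩ => by
    ext <;> simp only [drop_empty_overhangPart_drop hD.2.2 hC, basePart_drop hD.2.2 hC]
  right_inv := fun ⟨T, hT⟩ =>
    Subtype.ext (drop_basePart_drop_empty_overhangPart hT.1.2.1 hT.1.2.2.1)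

noncomputable def blockWt (s : Fin m → ℕ) (b : Blk) : Option (Fin m) →₀ ℕ :=
  Finsupp.equivFunOnFinite.symm fun o => o.elim 1 fun i => if b.width = s i then 1 else 0

noncomputable def wt (s : Fin m → ℕ) (T : Finset Blk) : Option (Fin m) →₀ ℕ :=
  ∑ b ∈ T, blockWt s b

theorem wt_none (s : Fin m → ℕ) (T : Finset Blk) : wt s T none = T.card := by
  simp [wt, blockWt, Finsupp.finsetSum_apply]

theorem wt_some (s : Fin m → ℕ) (T : Finset Blk) (i : Fin m) :
    wt s T (some i) = countW T (s i) := by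
  rw [countW, card_filter]
  simp [wt, blockWt, Finsupp.finsetSum_apply]

theorem wt_eq_iff {d : Option (Fin m) →₀ ℕ} :
    wt s T = d ↔ T.card = d none ∧ ∀ i, countW T (s i) = d (some i) := by
  rw [Finsupp.ext_iff, Option.forall, wt_none]
  simp only [wt_some]

theorem wt_drop (hC : disjointCells C) (hw : ∀ b ∈ C, 0 < b.width) :
    wt s (drop D C) = wt s D + wt s C := by
  rw [drop, wt, sum_union (disjoint_reheight_fall hw), reheight,
    sum_image ((preservesStacking_fall hC).injOn hC hw)]
  rfl

noncomputable def countSeries {σ α : Type*} (w : α → σ →₀ ℕ) : MvPowerSeries σ ℚ :=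
  fun d => Nat.card {a // w a = d}

section countSeries

variable {σ α β : Type*} {wA : α → σ →₀ ℕ} {wB : β → σ →₀ ℕ}

theorem coeff_countSeries (w : α → σ →₀ ℕ) (d : σ →₀ ℕ) :
    MvPowerSeries.coeff d (countSeries w) = Nat.card {a // w a = d} := rfl

theorem countSeries_congr (e : α ≃ β) (h : ∀ a, wB (e a) = wA a) :
    countSeries wA = countSeries wB := by
  ext d
  rw [coeff_countSeries, coeff_countSeries,
    Nat.card_congr (e.subtypeEquiv (q := (wB · = d)) fun a => by rw [h])]

theorem countSeries_add (hA : ∀ d, Finite {a // wA a = d}) (hB : ∀ d, Finite {b // wB b = d}) :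
    countSeries wA + countSeries wB = countSeries (Sum.elim wA wB) := by
  ext d
  rw [map_add, coeff_countSeries, coeff_countSeries, coeff_countSeries,
    Nat.card_congr (Equiv.subtypeSum.trans (Equiv.refl ({a // wA a = d} ⊕ {b // wB b = d}))),
    @Nat.card_sum _ _ (hA d) (hB d), Nat.cast_add]

theorem countSeries_mul [DecidableEq σ] (hA : ∀ d, Finite {a // wA a = d})
    (hB : ∀ d, Finite {b // wB b = d}) :
    countSeries wA * countSeries wB = countSeries fun p : α × β => wA p.1 + wB p.2 := by
  ext d
  let e : {p : α × β // wA p.1 + wB p.2 = d} ≃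
      Σ x : Finset.HasAntidiagonal.antidiagonal d, {a // wA a = x.1.1} × {b // wB b = x.1.2} :=
    { toFun := fun p => ⟨⟨(wA p.1.1, wB p.1.2), Finset.HasAntidiagonal.mem_antidiagonal.2 p.2⟩,
        ⟨p.1.1, rfl⟩, ⟨p.1.2, rfl⟩⟩
      invFun := fun x => ⟨(x.2.1.1, x.2.2.1), by
        rw [x.2.1.2, x.2.2.2]; exact Finset.HasAntidiagonal.mem_antidiagonal.1 x.1.2⟩
      left_inv := fun _ => rfl
      right_inv := by
        rintro ⟨⟨⟨e, f⟩, hx⟩, ⟨a, ha⟩, ⟨b, hb⟩⟩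
        dsimp only at ha hb
        subst ha hb
        rfl }
  rw [MvPowerSeries.coeff_mul, coeff_countSeries, Nat.card_congr e, Nat.card_sigma,
    ← Finset.sum_coe_sort]
  push_cast [Nat.card_prod]
  rfl

end countSeries

theorem gf_eq_countSeries (P : Finset Blk → Prop) :
    gf s P = countSeries fun T : {T // P T} => wt s T.1 := by
  ext d
  rw [coeff_countSeries, Nat.card_congr (Equiv.subtypeSubtypeEquivSubtypeInter P (wt s · = d))]
  exact congrArg Nat.cast (Nat.card_congr (Equiv.subtypeEquivRight fun T => by rw [wt_eq_iff]))

theorem supported.exists_height_eq (hT : supported T) (hb : b ∈ T) {j : ℕ} (hj : j ≤ b.height) :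
    ∃ a ∈ T, a.height = j := by
  induction hn : b.height generalizing b with
  | zero => exact ⟨b, hb, by omega⟩
  | succ k ih =>
    rcases hj.eq_or_lt with h | h
    · exact ⟨b, hb, by omega⟩
    · obtain ⟨a, ha, hak, -⟩ := hT.exists_overlaps hb hn
      exact ih ha (by omega) hak

theorem supported.height_lt_card (hT : supported T) (hb : b ∈ T) : b.height < T.card :=
  calc b.height < (range (b.height + 1)).card := by simp
    _ ≤ (T.image Blk.height).card := card_le_card fun j hj => by
      obtain ⟨a, ha, rfl⟩ := hT.exists_height_eq hb (Nat.lt_succ_iff.1 (mem_range.1 hj))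
      exact mem_image_of_mem _ ha
    _ ≤ T.card := card_image_le

theorem widthsOK.width_le (hT : widthsOK s T) (hb : b ∈ T) : b.width ≤ univ.sup s := by
  obtain ⟨i, hi⟩ := hT b hb
  exact hi ▸ le_sup (mem_univ i)

theorem IsConfig.abs_left_le (hT : IsConfig s 1 T) (hb : b ∈ T) :
    |b.left| ≤ ((b.height : ℤ) + 1) * (univ.sup s : ℕ) := by
  induction hn : b.height generalizing b with
  | zero =>
    have h0 := Blk.mem_colsSet.1 (hT.zero_mem_colsSet hb hn)
    have := hT.1.width_le hb
    rw [abs_le]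
    constructor <;> push_cast <;> omega
  | succ k ih =>
    obtain ⟨a, ha, hak, x, hxa, hxb⟩ := hT.2.2.1.exists_overlaps hb hn
    have iha := abs_le.1 (ih ha hak)
    have := hT.1.width_le ha
    have := hT.1.width_le hb
    rw [Blk.mem_colsSet] at hxa hxb
    rw [abs_le]
    push_cast at iha ⊢
    constructor <;> nlinarith

theorem finite_isConfig (s : Fin m → ℕ) (n : ℕ) :
    {T : Finset Blk | IsConfig s 1 T ∧ T.card = n}.Finite := by
  let box : Finset Blk :=
    (Icc (-(n * univ.sup s : ℤ)) (n * univ.sup s) ×ˢ range n ×ˢ range (univ.sup s + 1)).image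
    fun x => ⟨x.1, x.2.1, x.2.2⟩
  refine box.powerset.finite_toSet.subset fun T ⟨hT, hn⟩ =>
    mem_coe.2 (mem_powerset.2 fun b hb => ?_)
  have hh : b.height < n := hn ▸ hT.2.2.1.height_lt_card hb
  have hl := abs_le.1 ((hT.abs_left_le hb).trans
    (mul_le_mul_of_nonneg_right (by omega : (b.height : ℤ) + 1 ≤ n) (Nat.cast_nonneg _)))
  have hw := hT.1.width_le hb
  refine mem_image.2 ⟨(b.left, b.height, b.width), ?_, rfl⟩
  simp only [mem_product, mem_Icc, mem_range]
  omega

theorem finite_wt_fiber {P : Finset Blk → Prop} (hP : ∀ T, P T → IsConfig s 1 T)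
    (d : Option (Fin m) →₀ ℕ) : Finite {T : {T // P T} // wt s T.1 = d} :=
  have := (finite_isConfig s (d none)).to_subtype
  Finite.of_injective (fun T => (⟨T.1.1, hP _ T.1.2, (wt_eq_iff.1 T.2).1⟩ :
      {T : Finset Blk | IsConfig s 1 T ∧ T.card = d none}))
    fun _ _ h => Subtype.ext (Subtype.ext (congrArg Subtype.val h :))

theorem Vgf_one_eq_add (s : Fin m → ℕ) : Vgf s 1 = Wgf s 1 + gf s (IsHanging s) := by
  have hW (T) (hT : IsTower s T ∧ bottomCount T = 1) : IsConfig s 1 T :=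
    (isTower_and_bottomCount_eq_one_iff.1 hT).1
  rw [Vgf, Wgf, gf_eq_countSeries, gf_eq_countSeries, gf_eq_countSeries,
    countSeries_add (finite_wt_fiber hW) (finite_wt_fiber fun T hT => hT.1)]
  have hdisj : Disjoint (fun T => IsTower s T ∧ bottomCount T = 1) (IsHanging s) :=
    Pi.disjoint_iff.2 fun T => Prop.disjoint_iff.2 fun h => not_isHanging h.1 h.2
  refine (countSeries_congr ((subtypeOrEquiv _ _ hdisj).symm.trans
    (Equiv.subtypeEquivRight fun T => isConfig_iff_or.symm)) ?_).symm
  rintro (T | T) <;> rfl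

theorem gf_isHanging_mul_Ugf (s : Fin m → ℕ) : gf s (IsHanging s) * Ugf s = Wgf s 1 := by
  have hU (T) (hT : IsTower s T ∧ bottomCount T = 1 ∧ leftFree T) : IsConfig s 1 T :=
    (isTower_and_bottomCount_eq_one_iff.1 ⟨hT.1, hT.2.1⟩).1
  rw [Ugf, Wgf, gf_eq_countSeries, gf_eq_countSeries, gf_eq_countSeries,
    countSeries_mul (finite_wt_fiber fun T hT => hT.1) (finite_wt_fiber hU)]
  exact countSeries_congr (dropEquiv s) fun ⟨⟨C, hC⟩, ⟨D, hD⟩⟩ =>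
    (wt_drop hC.1.2.1 fun b hb => hC.1.width_pos hb).trans (add_comm _ _)

end

theorem gf_W1_V1_U_general {m : ℕ} (s : Fin m → ℕ) :
    (1 + Ugf s) * Wgf s 1 = Vgf s 1 * Ugf s := by
  rw [Vgf_one_eq_add, add_mul (Wgf s 1), gf_isHanging_mul_Ugf]
  ring

/-- `(1 + U) · W_1 = V_1 · U` in `ℚ[[x, y_1, …, y_m]]`. -/
theorem gf_W1_V1_U {m : ℕ} (s : Fin m → ℕ) (hpos : ∀ i, 0 < s i)
    (hinj : Function.Injective s) :
    (1 + Ugf s) * Wgf s 1 = Vgf s 1 * Ugf s :=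
  gf_W1_V1_U_general s
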